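/- Consider a discrete-time SIS process on a graph G with n vertices and adjacency matrix A, with initial infection probability p_init, per-edge infection probability β, and recovery probability δ, where each vertex i is infected at time 0 independently with probability p_init, an infected vertex recovers with probability δ, and a susceptible vertex with infected neighbor set N gets infected with probability 1 - ∏_{j∈N}(1-β). Then the expected number of infected vertices at time t satisfies E[Zᵗ] ≤ p_init · (1 - δ + β·ρ(A))ᵗ · n, where ρ(A) is the spectral radius of A. -/

import Mathlib

open MeasureTheory ProbabilityTheory

open Matrix

variable {n : ℕ}

lemma pow_diag (U : Matrix (Fin n) (Fin n) ℝ) (d : Fin n → ℝ)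
    (h1 : star U * U = 1) (h2 : U * star U = 1)
    (B : Matrix (Fin n) (Fin n) ℝ) (hB : B = U * Matrix.diagonal d * star U) (t : ℕ) :
    B ^ t = U * Matrix.diagonal (fun i => d i ^ t) * star U := by
  induction t with
  | zero => simp only [pow_zero, Matrix.diagonal_one, pow_zero]; rw [mul_one, h2]
  | succ t ih =>
    rw [pow_succ, ih, hB]
    simp only [← Matrix.mul_assoc]
    rw [Matrix.mul_assoc (U * Matrix.diagonal fun i => d i ^ t) (star U) U, h1,
      Matrix.mul_one, Matrix.mul_assoc U (Matrix.diagonal fun i => d i ^ t) (Matrix.diagonal d),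
      Matrix.diagonal_mul_diagonal]
    congr 2

lemma spectral_decomp {B : Matrix (Fin n) (Fin n) ℝ} (hB : B.IsHermitian) :
    B = (hB.eigenvectorUnitary : Matrix (Fin n) (Fin n) ℝ)
      * Matrix.diagonal hB.eigenvalues
      * (star (hB.eigenvectorUnitary : Matrix (Fin n) (Fin n) ℝ)) := by
  have := hB.spectral_theorem
  have h : (RCLike.ofReal ∘ hB.eigenvalues : Fin n → ℝ) = hB.eigenvalues := by
    funext i; simp [RCLike.ofReal]
  rwa [h] at this

lemma star_eq_transpose (U : Matrix (Fin n) (Fin n) ℝ) : star U = U.transpose := by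
  ext i j; simp [Matrix.star_apply]

lemma quad_pow {B : Matrix (Fin n) (Fin n) ℝ} (hB : B.IsHermitian) (t : ℕ) (x : Fin n → ℝ) :
    x ⬝ᵥ ((B ^ t) *ᵥ x)
      = ∑ i, hB.eigenvalues i ^ t
          * ((star (hB.eigenvectorUnitary : Matrix (Fin n) (Fin n) ℝ) *ᵥ x) i) ^ 2 := by
  set U : Matrix (Fin n) (Fin n) ℝ := (hB.eigenvectorUnitary : Matrix (Fin n) (Fin n) ℝ) with hU
  have h1 : star U * U = 1 := Unitary.coe_star_mul_self hB.eigenvectorUnitary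
  have h2 : U * star U = 1 := Unitary.coe_mul_star_self hB.eigenvectorUnitary
  rw [pow_diag U hB.eigenvalues h1 h2 B (spectral_decomp hB) t]
  rw [← Matrix.mulVec_mulVec, ← Matrix.mulVec_mulVec, Matrix.dotProduct_mulVec,
    ← Matrix.mulVec_transpose, ← star_eq_transpose U]
  simp only [dotProduct, Matrix.mulVec_diagonal]
  apply Finset.sum_congr rfl
  intro i _
  ring

lemma coords_sq {B : Matrix (Fin n) (Fin n) ℝ} (hB : B.IsHermitian) (x : Fin n → ℝ) :
    ∑ i, ((star (hB.eigenvectorUnitary : Matrix (Fin n) (Fin n) ℝ) *ᵥ x) i) ^ 2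
      = x ⬝ᵥ x := by
  set U : Matrix (Fin n) (Fin n) ℝ := (hB.eigenvectorUnitary : Matrix (Fin n) (Fin n) ℝ) with hU
  have h2 : U * star U = 1 := Unitary.coe_mul_star_self hB.eigenvectorUnitary
  have : ∑ i, ((star U *ᵥ x) i) ^ 2 = (star U *ᵥ x) ⬝ᵥ (star U *ᵥ x) := by
    simp [dotProduct, sq]
  rw [this, Matrix.dotProduct_mulVec, ← Matrix.mulVec_transpose, ← star_eq_transpose (star U),
    star_star, Matrix.mulVec_mulVec, h2, Matrix.one_mulVec]

lemma eig_le_sSup {B : Matrix (Fin n) (Fin n) ℝ} (hB : B.IsHermitian) (i : Fin n) :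
    hB.eigenvalues i ≤ sSup (spectrum ℝ B) :=
  le_csSup (B.finite_spectrum).bddAbove (hB.eigenvalues_mem_spectrum_real i)

lemma quad_le {B : Matrix (Fin n) (Fin n) ℝ} (hB : B.IsHermitian) (x : Fin n → ℝ) :
    x ⬝ᵥ (B *ᵥ x) ≤ sSup (spectrum ℝ B) * (x ⬝ᵥ x) := by
  have h := quad_pow hB 1 x
  rw [pow_one] at h
  rw [h, ← coords_sq hB x, Finset.mul_sum]
  apply Finset.sum_le_sum
  intro i _
  simp only [pow_one]
  exact mul_le_mul_of_nonneg_right (eig_le_sSup hB i) (sq_nonneg _)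

lemma quad_lower {B : Matrix (Fin n) (Fin n) ℝ} (hB : B.IsHermitian)
    (hpos : ∀ i j, 0 ≤ B i j) (x : Fin n → ℝ) :
    -(sSup (spectrum ℝ B) * (x ⬝ᵥ x)) ≤ x ⬝ᵥ (B *ᵥ x) := by
  have habs : -(x ⬝ᵥ (B *ᵥ x)) ≤ (fun i => |x i|) ⬝ᵥ (B *ᵥ fun i => |x i|) := by
    refine (neg_le_abs _).trans ?_
    simp only [dotProduct, Matrix.mulVec]
    refine (Finset.abs_sum_le_sum_abs _ _).trans ?_
    apply Finset.sum_le_sum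
    intro i _
    rw [abs_mul]
    refine mul_le_mul_of_nonneg_left ?_ (abs_nonneg (x i))
    refine (Finset.abs_sum_le_sum_abs _ _).trans ?_
    apply Finset.sum_le_sum
    intro j _
    rw [abs_mul, abs_of_nonneg (hpos i j)]
  have h2 := quad_le hB (fun i => |x i|)
  have h3 : ((fun i => |x i|) ⬝ᵥ fun i => |x i|) = x ⬝ᵥ x := by
    simp [dotProduct, abs_mul_abs_self]
  rw [h3] at h2
  linarith

lemma M_eig_bound {A : Matrix (Fin n) (Fin n) ℝ} (hA : A.IsHermitian)
    (hApos : ∀ i j, 0 ≤ A i j) {β δ : ℝ} (hβ0 : 0 ≤ β) (hδ1 : δ ≤ 1)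
    {M : Matrix (Fin n) (Fin n) ℝ} (hMdef : M = (1 - δ) • (1 : Matrix (Fin n) (Fin n) ℝ) + β • A)
    (hM : M.IsHermitian) (i : Fin n) :
    |hM.eigenvalues i| ≤ 1 - δ + β * sSup (spectrum ℝ A) := by
  set v : Fin n → ℝ := ⇑(hM.eigenvectorBasis i) with hv
  have hMv : M *ᵥ v = hM.eigenvalues i • v := hM.mulVec_eigenvectorBasis i
  have hvv : v ⬝ᵥ v = 1 := by
    have hnorm := hM.eigenvectorBasis.orthonormal.1 i
    have h2 : (inner ℝ (hM.eigenvectorBasis i) (hM.eigenvectorBasis i) : ℝ) = 1 := by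
      rw [real_inner_self_eq_norm_mul_norm, hnorm]; norm_num
    rw [← h2, PiLp.inner_apply]
    simp only [dotProduct, v, RCLike.inner_apply, conj_trivial, mul_comm]
  have hval : hM.eigenvalues i = v ⬝ᵥ (M *ᵥ v) := by
    rw [hMv, dotProduct_smul, hvv, smul_eq_mul, mul_one]
  have hexpand : v ⬝ᵥ (M *ᵥ v) = (1 - δ) + β * (v ⬝ᵥ (A *ᵥ v)) := by
    rw [hMdef, Matrix.add_mulVec, Matrix.smul_mulVec, Matrix.smul_mulVec,
      Matrix.one_mulVec, dotProduct_add, dotProduct_smul, dotProduct_smul,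
      hvv, smul_eq_mul, smul_eq_mul, mul_one]
  have hup := quad_le hA v
  have hlo := quad_lower hA hApos v
  rw [hvv, mul_one] at hup hlo
  rw [abs_le]
  constructor
  · rw [hval, hexpand]
    nlinarith
  · rw [hval, hexpand]
    nlinarith

lemma ones_bound {A : Matrix (Fin n) (Fin n) ℝ} (hA : A.IsHermitian)
    (hApos : ∀ i j, 0 ≤ A i j) {β δ : ℝ} (hβ0 : 0 ≤ β) (hδ1 : δ ≤ 1)
    {M : Matrix (Fin n) (Fin n) ℝ} (hMdef : M = (1 - δ) • (1 : Matrix (Fin n) (Fin n) ℝ) + β • A)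
    (hM : M.IsHermitian) (t : ℕ) :
    (fun _ => (1:ℝ)) ⬝ᵥ ((M ^ t) *ᵥ fun _ => (1:ℝ))
      ≤ (1 - δ + β * sSup (spectrum ℝ A)) ^ t * n := by
  rw [quad_pow hM t (fun _ => 1)]
  have hsum : ∑ i, ((star (hM.eigenvectorUnitary : Matrix (Fin n) (Fin n) ℝ)
      *ᵥ fun _ => (1:ℝ)) i) ^ 2 = n := by
    rw [coords_sq hM (fun _ => 1)]
    simp [dotProduct]
  calc ∑ i, hM.eigenvalues i ^ t
        * ((star (hM.eigenvectorUnitary : Matrix (Fin n) (Fin n) ℝ) *ᵥ fun _ => (1:ℝ)) i) ^ 2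
      ≤ ∑ i, (1 - δ + β * sSup (spectrum ℝ A)) ^ t
        * ((star (hM.eigenvectorUnitary : Matrix (Fin n) (Fin n) ℝ) *ᵥ fun _ => (1:ℝ)) i) ^ 2 := by
        apply Finset.sum_le_sum
        intro i _
        refine mul_le_mul_of_nonneg_right ?_ (sq_nonneg _)
        calc hM.eigenvalues i ^ t ≤ |hM.eigenvalues i ^ t| := le_abs_self _
          _ = |hM.eigenvalues i| ^ t := by rw [abs_pow]
          _ ≤ (1 - δ + β * sSup (spectrum ℝ A)) ^ t :=
            pow_le_pow_left₀ (abs_nonneg _) (M_eig_bound hA hApos hβ0 hδ1 hMdef hM i) t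
    _ = (1 - δ + β * sSup (spectrum ℝ A)) ^ t * n := by rw [← Finset.mul_sum, hsum]

lemma one_sub_prod_le {ι : Type*} (s : Finset ι) (f : ι → ℝ)
    (h0 : ∀ i ∈ s, 0 ≤ f i) (h1 : ∀ i ∈ s, f i ≤ 1) :
    1 - ∏ i ∈ s, (1 - f i) ≤ ∑ i ∈ s, f i := by
  induction s using Finset.cons_induction with
  | empty => simp
  | cons a s ha ih =>
    rw [Finset.prod_cons, Finset.sum_cons]
    have hP0 : 0 ≤ ∏ i ∈ s, (1 - f i) :=
      Finset.prod_nonneg fun i hi => by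
        have := h1 i (Finset.mem_cons_of_mem hi); linarith
    have hP1 : ∏ i ∈ s, (1 - f i) ≤ 1 :=
      Finset.prod_le_one (fun i hi => by
        have := h1 i (Finset.mem_cons_of_mem hi); linarith)
        (fun i hi => by have := h0 i (Finset.mem_cons_of_mem hi); linarith)
    have hih : 1 - ∏ i ∈ s, (1 - f i) ≤ ∑ i ∈ s, f i :=
      ih (fun i hi => h0 i (Finset.mem_cons_of_mem hi))
        (fun i hi => h1 i (Finset.mem_cons_of_mem hi))
    have ha0 : 0 ≤ f a := h0 a (Finset.mem_cons_self a s)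
    nlinarith


/-- The spectral radius (largest eigenvalue) of the adjacency matrix of a finite simple graph. -/
noncomputable def specRad {V : Type*} [Fintype V] [DecidableEq V]
    (G : SimpleGraph V) [DecidableRel G.Adj] : ℝ :=
  sSup (spectrum ℝ (G.adjMatrix ℝ))

/-- Discrete-time SIS process: `Y t i` is the 0/1 infection indicator of vertex `i` at time `t`.
Vertices are initially infected independently with probability `pinit`; an infected vertex
recovers with probability `δ`, and a susceptible vertex with infected neighbors gets infected
with probability `1 - ∏(1 - β·Yⱼ)`.  Then `E[Zᵗ] ≤ pinit · (1 - δ + β·ρ(A))ᵗ · n`. -/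
theorem stmt_6 {n : ℕ} {Ω : Type*} [MeasurableSpace Ω]
    (μ : Measure Ω) [IsProbabilityMeasure μ]
    (G : SimpleGraph (Fin n)) [DecidableRel G.Adj]
    (pinit β δ : ℝ) (hpinit0 : 0 ≤ pinit) (hpinit1 : pinit ≤ 1)
    (hβ0 : 0 ≤ β) (hβ1 : β ≤ 1) (hδ0 : 0 ≤ δ) (hδ1 : δ ≤ 1)
    (Y : ℕ → Fin n → Ω → ℝ)
    (hmeas : ∀ t i, Measurable (Y t i))
    (h01 : ∀ t i ω, Y t i ω = 0 ∨ Y t i ω = 1)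
    (hinit : ∀ i, ∫ ω, Y 0 i ω ∂μ = pinit)
    (hindep : iIndepFun (fun i => Y 0 i) μ)
    (hdyn : ∀ t i,
      μ[Y (t + 1) i | MeasurableSpace.comap (fun ω j => Y t j ω) inferInstance]
        =ᵐ[μ] fun ω => (1 - δ) * Y t i ω
          + (1 - ∏ j ∈ G.neighborFinset i, (1 - β * Y t j ω)) * (1 - Y t i ω)) :
    ∀ t, ∫ ω, (∑ i, Y t i ω) ∂μ ≤ pinit * (1 - δ + β * specRad G) ^ t * n := by
  classical
  set A : Matrix (Fin n) (Fin n) ℝ := G.adjMatrix ℝ with hAdef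
  have hA : A.IsHermitian := Matrix.IsHermitian.ext fun i j => by
    simp [hAdef, SimpleGraph.adjMatrix_apply, G.adj_comm]
  have hApos : ∀ i j, 0 ≤ A i j := fun i j => by
    by_cases h : G.Adj i j <;> simp [hAdef, h]
  set M : Matrix (Fin n) (Fin n) ℝ := (1 - δ) • (1 : Matrix (Fin n) (Fin n) ℝ) + β • A
    with hMdef
  have hM : M.IsHermitian := by
    apply Matrix.IsHermitian.ext
    intro i j
    have h1 : A j i = A i j := by simpa using hA.apply i j
    by_cases h : i = j <;>
      simp [hMdef, Matrix.add_apply, Matrix.smul_apply, Matrix.one_apply, h, h1, eq_comm]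
  have hMpos : ∀ i j, 0 ≤ M i j := by
    intro i j
    simp only [hMdef, Matrix.add_apply, Matrix.smul_apply, Matrix.one_apply, smul_eq_mul]
    have h1 := hApos i j
    have h2 : 0 ≤ β * A i j := mul_nonneg hβ0 h1
    by_cases h : i = j
    · subst h
      have hdiag : A i i = 0 := by simp [hAdef]
      rw [hdiag]
      simp
      linarith
    · simp [h]
      linarith
  -- integrability
  have hint : ∀ t i, Integrable (Y t i) μ := by
    intro t i
    refine Integrable.mono' (integrable_const 1) (hmeas t i).aestronglyMeasurable ?_
    filter_upwards with ω
    rcases h01 t i ω with h | h <;> simp [h]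
  -- the recursion
  have hrec : ∀ t i, ∫ ω, Y (t + 1) i ω ∂μ
      ≤ (1 - δ) * ∫ ω, Y t i ω ∂μ + β * ∑ j ∈ G.neighborFinset i, ∫ ω, Y t j ω ∂μ := by
    intro t i
    have hmle : MeasurableSpace.comap (fun ω j => Y t j ω) inferInstance
        ≤ (inferInstance : MeasurableSpace Ω) :=
      (measurable_pi_lambda _ (fun j => hmeas t j)).comap_le
    have h1 : ∫ ω, Y (t + 1) i ω ∂μ
        = ∫ ω, ((1 - δ) * Y t i ω
          + (1 - ∏ j ∈ G.neighborFinset i, (1 - β * Y t j ω)) * (1 - Y t i ω)) ∂μ := by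
      rw [← integral_condExp hmle]
      exact integral_congr_ae (hdyn t i)
    rw [h1]
    have hgmeas : Measurable (fun ω => (1 - δ) * Y t i ω
        + (1 - ∏ j ∈ G.neighborFinset i, (1 - β * Y t j ω)) * (1 - Y t i ω)) := by
      apply Measurable.add
      · exact (hmeas t i).const_mul _
      · exact ((measurable_const.sub (Finset.measurable_prod _
          (fun j _ => measurable_const.sub ((hmeas t j).const_mul _)))).mul
          (measurable_const.sub (hmeas t i)))
    have hbounds : ∀ ω, (0 ≤ ∏ j ∈ G.neighborFinset i, (1 - β * Y t j ω)
        ∧ ∏ j ∈ G.neighborFinset i, (1 - β * Y t j ω) ≤ 1)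
        ∧ 0 ≤ (1 - ∏ j ∈ G.neighborFinset i, (1 - β * Y t j ω))
        ∧ (1 - ∏ j ∈ G.neighborFinset i, (1 - β * Y t j ω))
            ≤ β * ∑ j ∈ G.neighborFinset i, Y t j ω := by
      intro ω
      have hf0 : ∀ j ∈ G.neighborFinset i, 0 ≤ β * Y t j ω := by
        intro j _
        rcases h01 t j ω with h | h <;> simp [h] <;> nlinarith
      have hf1 : ∀ j ∈ G.neighborFinset i, β * Y t j ω ≤ 1 := by
        intro j _
        rcases h01 t j ω with h | h <;> simp [h] <;> nlinarith
      have hP0 : 0 ≤ ∏ j ∈ G.neighborFinset i, (1 - β * Y t j ω) :=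
        Finset.prod_nonneg (fun j hj => by have := hf1 j hj; linarith)
      have hP1 : ∏ j ∈ G.neighborFinset i, (1 - β * Y t j ω) ≤ 1 :=
        Finset.prod_le_one (fun j hj => by have := hf1 j hj; linarith)
          (fun j hj => by have := hf0 j hj; linarith)
      refine ⟨⟨hP0, hP1⟩, by linarith, ?_⟩
      have := one_sub_prod_le (G.neighborFinset i) (fun j => β * Y t j ω) hf0 hf1
      rw [Finset.mul_sum]
      simpa using this
    have hgint : Integrable (fun ω => (1 - δ) * Y t i ω
        + (1 - ∏ j ∈ G.neighborFinset i, (1 - β * Y t j ω)) * (1 - Y t i ω)) μ := by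
      refine Integrable.mono' (integrable_const 2) hgmeas.aestronglyMeasurable ?_
      filter_upwards with ω
      obtain ⟨⟨hP0, hP1⟩, hb0, hb1⟩ := hbounds ω
      rw [Real.norm_eq_abs, abs_le]
      rcases h01 t i ω with h | h <;> constructor <;> simp [h] <;> linarith
    have hhint : Integrable (fun ω => (1 - δ) * Y t i ω
        + β * ∑ j ∈ G.neighborFinset i, Y t j ω) μ :=
      ((hint t i).const_mul _).add
        ((integrable_finset_sum _ (fun j _ => hint t j)).const_mul _)
    have hptwise : ∀ ω, (1 - δ) * Y t i ω
        + (1 - ∏ j ∈ G.neighborFinset i, (1 - β * Y t j ω)) * (1 - Y t i ω)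
        ≤ (1 - δ) * Y t i ω + β * ∑ j ∈ G.neighborFinset i, Y t j ω := by
      intro ω
      obtain ⟨⟨hP0, hP1⟩, hb0, hb1⟩ := hbounds ω
      have hy : 0 ≤ 1 - Y t i ω ∧ 1 - Y t i ω ≤ 1 := by
        rcases h01 t i ω with h | h <;> simp [h]
      nlinarith [hy.1, hy.2]
    calc ∫ ω, ((1 - δ) * Y t i ω
          + (1 - ∏ j ∈ G.neighborFinset i, (1 - β * Y t j ω)) * (1 - Y t i ω)) ∂μ
        ≤ ∫ ω, ((1 - δ) * Y t i ω + β * ∑ j ∈ G.neighborFinset i, Y t j ω) ∂μ :=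
          integral_mono hgint hhint hptwise
      _ = (1 - δ) * ∫ ω, Y t i ω ∂μ + β * ∑ j ∈ G.neighborFinset i, ∫ ω, Y t j ω ∂μ := by
          rw [integral_add ((hint t i).const_mul _)
            ((integrable_finset_sum _ (fun j _ => hint t j)).const_mul _),
            integral_const_mul, integral_const_mul,
            integral_finset_sum _ (fun j _ => hint t j)]
  -- vector induction
  have hvec : ∀ t i, ∫ ω, Y t i ω ∂μ ≤ ((M ^ t) *ᵥ fun _ => pinit) i := by
    intro t
    induction t with
    | zero =>
      intro i
      simp only [pow_zero, Matrix.one_mulVec]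
      exact le_of_eq (hinit i)
    | succ t ih =>
      intro i
      calc ∫ ω, Y (t + 1) i ω ∂μ
          ≤ (1 - δ) * ∫ ω, Y t i ω ∂μ + β * ∑ j ∈ G.neighborFinset i, ∫ ω, Y t j ω ∂μ :=
            hrec t i
        _ = (M *ᵥ fun j => ∫ ω, Y t j ω ∂μ) i := by
            rw [hMdef, Matrix.add_mulVec, Matrix.smul_mulVec, Matrix.smul_mulVec,
              Matrix.one_mulVec, Pi.add_apply, Pi.smul_apply, Pi.smul_apply, smul_eq_mul,
              smul_eq_mul, hAdef, SimpleGraph.adjMatrix_mulVec_apply]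
        _ ≤ (M *ᵥ ((M ^ t) *ᵥ fun _ => pinit)) i := by
            simp only [Matrix.mulVec, dotProduct]
            exact Finset.sum_le_sum fun j _ =>
              mul_le_mul_of_nonneg_left (ih j) (hMpos i j)
        _ = ((M ^ (t + 1)) *ᵥ fun _ => pinit) i := by
            rw [Matrix.mulVec_mulVec, ← pow_succ']
  -- conclusion
  intro t
  rw [integral_finset_sum _ (fun i _ => hint t i)]
  have hsum : ∑ i, ((M ^ t) *ᵥ fun _ => pinit) i
      = pinit * ((fun _ => (1:ℝ)) ⬝ᵥ ((M ^ t) *ᵥ fun _ => (1:ℝ))) := by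
    have : (fun _ => pinit : Fin n → ℝ) = pinit • (fun _ => (1:ℝ)) := by
      funext j; simp
    rw [this, Matrix.mulVec_smul]
    simp [dotProduct, Finset.mul_sum]
  calc ∑ i, ∫ ω, Y t i ω ∂μ
      ≤ ∑ i, ((M ^ t) *ᵥ fun _ => pinit) i := Finset.sum_le_sum fun i _ => hvec t i
    _ = pinit * ((fun _ => (1:ℝ)) ⬝ᵥ ((M ^ t) *ᵥ fun _ => (1:ℝ))) := hsum
    _ ≤ pinit * ((1 - δ + β * sSup (spectrum ℝ A)) ^ t * n) :=
        mul_le_mul_of_nonneg_left (ones_bound hA hApos hβ0 hδ1 hMdef hM t) hpinit0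
    _ = pinit * (1 - δ + β * specRad G) ^ t * n := by
        rw [specRad, ← hAdef, mul_assoc]
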